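/- Among the weights μ_S and μ_S' for S ⊆ {1,...,l-1}, exactly two are dominant integral for B_l: μ_∅ = 0 and μ_∅' = ω_l. -/
import Mathlib


noncomputable section

/-- The coefficient `x_j = i_j + 2 Σ_{s>j} (-1)^{s-j} i_s + (-1)^{k-j+1}(l + half)`
of `ω_{i_j}` (with `half = -1/2` for `μ_S` and `half = 1/2` for `μ_S'`). -/
def xS (l k : ℕ) (i : Fin k → ℕ) (half : ℚ) (j : Fin k) : ℚ :=
  (i j : ℚ) + 2 * (∑ s ∈ Finset.Ioi j, (-1 : ℚ) ^ (s.val - j.val) * (i s : ℚ)) +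
    (-1 : ℚ) ^ (k - j.val) * ((l : ℚ) + half)

/-- The coordinates of `μ_S` in the fundamental weight basis `ω_1, …, ω_l`
(1-based index `t`). -/
def muCoef (l k : ℕ) (i : Fin k → ℕ) : ℕ → ℚ :=
  fun t => ∑ j : Fin k, if i j = t then xS l k i (-(1 / 2)) j else 0

/-- The coordinates of `μ_S' = ω_l + Σ_j x_j' ω_{i_j}` in the fundamental
weight basis (1-based index `t`). -/
def muCoef' (l k : ℕ) (i : Fin k → ℕ) : ℕ → ℚ :=
  fun t => (if t = l then 1 else 0) +
    ∑ j : Fin k, if i j = t then xS l k i (1 / 2) j else 0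

/-- Dominant integral for `B_l`: all coordinates in the fundamental weight
basis are nonnegative integers. -/
def DomInt (l : ℕ) (c : ℕ → ℚ) : Prop :=
  ∀ t, 1 ≤ t → t ≤ l → ∃ m : ℕ, c t = (m : ℚ)

lemma sum_ite_last (l k : ℕ) (hk : 1 ≤ k) (i : Fin k → ℕ) (hmono : StrictMono i)
    (half : ℚ) :
    (∑ j : Fin k, if i j = i ⟨k - 1, by omega⟩ then xS l k i half j else 0)
      = (i ⟨k - 1, by omega⟩ : ℚ) - ((l : ℚ) + half) := by
  set jm : Fin k := ⟨k - 1, by omega⟩ with hjm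
  rw [Finset.sum_eq_single_of_mem jm (Finset.mem_univ _)]
  · rw [if_pos rfl]
    have hIoi : Finset.Ioi jm = ∅ := by
      apply Finset.eq_empty_of_forall_notMem
      intro s hs
      have := Finset.mem_Ioi.mp hs
      have h1 : jm.val < s.val := this
      have h2 : s.val < k := s.isLt
      simp only [hjm] at h1
      omega
    have hexp : k - jm.val = 1 := by simp only [hjm]; omega
    simp [xS, hIoi, hexp]
    ring
  · intro b _ hb
    rw [if_neg]
    intro h
    exact hb (hmono.injective h)

theorem exactly_two_dominant_integral (l : ℕ) (hl : 1 ≤ l)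
    (k : ℕ) (i : Fin k → ℕ) (hmono : StrictMono i)
    (hrange : ∀ j, 1 ≤ i j ∧ i j ≤ l - 1) :
    (DomInt l (muCoef l k i) ↔ k = 0) ∧
    (DomInt l (muCoef' l k i) ↔ k = 0) ∧
    (∀ t, muCoef l 0 (fun j => j.elim0) t = 0) ∧
    (∀ t, muCoef' l 0 (fun j => j.elim0) t = if t = l then 1 else 0) := by
  have hk0muCoef : k = 0 → ∀ t, muCoef l k i t = 0 := by
    intro hk t
    subst hk
    simp [muCoef]
  have hk0muCoef' : k = 0 → ∀ t, muCoef' l k i t = if t = l then 1 else 0 := by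
    intro hk t
    subst hk
    simp [muCoef']
  refine ⟨⟨?_, ?_⟩, ⟨?_, ?_⟩, ?_, ?_⟩
  · -- DomInt muCoef → k = 0
    intro hD
    by_contra hk
    have hk1 : 1 ≤ k := by omega
    set jm : Fin k := ⟨k - 1, by omega⟩ with hjm
    obtain ⟨h1, h2⟩ := hrange jm
    obtain ⟨m, hm⟩ := hD (i jm) h1 (by omega)
    rw [muCoef, sum_ite_last l k hk1 i hmono] at hm
    have : (2 * i jm + 1 : ℚ) = (2 * m + 2 * l : ℚ) := by
      push_cast at hm ⊢
      linarith
    have : (2 * i jm + 1 : ℕ) = 2 * m + 2 * l := by exact_mod_cast (by push_cast; exact_mod_cast this)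
    omega
  · intro hk
    intro t ht1 ht2
    exact ⟨0, by rw [hk0muCoef hk t]; simp⟩
  · -- DomInt muCoef' → k = 0
    intro hD
    by_contra hk
    have hk1 : 1 ≤ k := by omega
    set jm : Fin k := ⟨k - 1, by omega⟩ with hjm
    obtain ⟨h1, h2⟩ := hrange jm
    obtain ⟨m, hm⟩ := hD (i jm) h1 (by omega)
    rw [muCoef', sum_ite_last l k hk1 i hmono, if_neg (by omega)] at hm
    have : (2 * i jm : ℚ) = (2 * m + 2 * l + 1 : ℚ) := by
      push_cast at hm ⊢
      linarith
    have : (2 * i jm : ℕ) = 2 * m + 2 * l + 1 := by exact_mod_cast (by push_cast; exact_mod_cast this)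
    omega
  · intro hk t ht1 ht2
    refine ⟨if t = l then 1 else 0, ?_⟩
    rw [hk0muCoef' hk t]
    split <;> simp
  · intro t; simp [muCoef]
  · intro t; simp [muCoef']
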